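/- arXiv:2308.08890 — 5 statements merged into one kernel-verified Lean document; each statement's English description precedes it below -/
import Mathlib

section
/- Let H be a Hilbert space and L1, L2, L3, L4 closed subspaces. Then L1 ⊥ L2 | L4 and L1 ⊥ L3 | L4 hold simultaneously if and only if L1 ⊥ (L2 ∨ L3) | L4, where L2 ∨ L3 denotes the closed linear span of L2 + L3 (composition/decomposition property of conditional orthogonality). -/
open scoped InnerProductSpace

/-- Conditional orthogonality: `L1 ⊥ L2 | L3`. -/
def CondOrth {H : Type*} [NormedAddCommGroup H] [InnerProductSpace ℂ H]
    (L1 L2 L3 : Submodule ℂ H) [CompleteSpace L3] : Prop :=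
  ∀ x ∈ L1, ∀ y ∈ L2,
    ⟪x - (L3.orthogonalProjectionOnto x : H), y - (L3.orthogonalProjectionOnto y : H)⟫_ℂ = 0

/-!
With `P` the projection onto `L4`, `x - P x ∈ L4ᗮ` and `P y ∈ L4`, so the inner product of the
residuals is `⟪x - P x, y⟫`. Hence `L1 ⊥ L2 | L4` says that `L2` is orthogonal to the image of `L1`
under the projection onto `L4ᗮ`; the orthogonal complement of that image is a closed subspace, so it
contains `L2` and `L3` iff it contains the closure of `L2 ⊔ L3`.
-/

namespace Submodule

variable {𝕜 E : Type*} [RCLike 𝕜] [NormedAddCommGroup E] [InnerProductSpace 𝕜 E]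

theorem isOrtho_topologicalClosure_right {U V : Submodule 𝕜 E} :
    U ⟂ V.topologicalClosure ↔ U ⟂ V := by
  rw [isOrtho_iff_le, isOrtho_iff_le, orthogonal_closure]

theorem inner_sub_starProjection_sub_starProjection (K : Submodule 𝕜 E)
    [K.HasOrthogonalProjection] (x y : E) :
    ⟪x - K.starProjection x, y - K.starProjection y⟫_𝕜 = ⟪Kᗮ.starProjection x, y⟫_𝕜 := by
  rw [inner_sub_right, starProjection_inner_eq_zero x _ (K.starProjection_apply_mem y),
    sub_zero, starProjection_orthogonal']
  rfl

end Submodule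

open Submodule in
theorem condOrth_iff_isOrtho {H : Type*} [NormedAddCommGroup H] [InnerProductSpace ℂ H]
    (L1 L2 L3 : Submodule ℂ H) [CompleteSpace L3] :
    CondOrth L1 L2 L3 ↔ L1.map (L3ᗮ.starProjection : H →ₗ[ℂ] H) ⟂ L2 := by
  simp only [CondOrth, isOrtho_iff_inner_eq, mem_map, forall_exists_index, and_imp,
    forall_apply_eq_imp_iff₂, coe_orthogonalProjectionOnto_apply,
    inner_sub_starProjection_sub_starProjection, ContinuousLinearMap.coe_coe]

theorem condOrth_composition_general {H : Type*} [NormedAddCommGroup H] [InnerProductSpace ℂ H]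
    (L1 L2 L3 L4 : Submodule ℂ H)
    [CompleteSpace L4] :
    (CondOrth L1 L2 L4 ∧ CondOrth L1 L3 L4) ↔
      CondOrth L1 ((L2 ⊔ L3).topologicalClosure) L4 := by
  rw [condOrth_iff_isOrtho, condOrth_iff_isOrtho, condOrth_iff_isOrtho,
    Submodule.isOrtho_topologicalClosure_right, Submodule.isOrtho_sup_right]

/-- (De-)Composition property of conditional orthogonality:
`L1 ⊥ L2 | L4` and `L1 ⊥ L3 | L4` hold iff `L1 ⊥ (L2 ∨ L3) | L4`. -/
theorem condOrth_composition {H : Type*} [NormedAddCommGroup H] [InnerProductSpace ℂ H]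
    [CompleteSpace H] (L1 L2 L3 L4 : Submodule ℂ H)
    (h1 : IsClosed (L1 : Set H)) (h2 : IsClosed (L2 : Set H))
    (h3 : IsClosed (L3 : Set H)) (h4 : IsClosed (L4 : Set H))
    [CompleteSpace L4] :
    (CondOrth L1 L2 L4 ∧ CondOrth L1 L3 L4) ↔
      CondOrth L1 ((L2 ⊔ L3).topologicalClosure) L4 :=
  condOrth_composition_general L1 L2 L3 L4
end

section
/- Let H be a Hilbert space and L1, L2, L3, L4 closed subspaces. If L1 ⊥ L2 | L4 and L1 ⊥ L3 | (L2 ∨ L4), then L1 ⊥ (L2 ∨ L3) | L4 (contraction property of conditional orthogonality). -/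
open scoped InnerProductSpace

/-!
`L1 ⊥ L2 | K` says that the residual `x - P_K x` of every `x ∈ L1` is orthogonal to `L2`.
For `x ∈ L1` the residual `v = x - P_{L4} x` is orthogonal to `L2` and to `L4`, hence to
`L2 ∨ L4`, so `P_{L4} x` is also the projection of `x` onto `L2 ∨ L4`. The second hypothesis
then says `v ⊥ L3`, so `v ⊥ L2 ∨ L3`.
-/

namespace CondOrth

variable {H : Type*} [NormedAddCommGroup H] [InnerProductSpace ℂ H]

theorem iff_forall_sub_starProjection_mem_orthogonal (L1 L2 K : Submodule ℂ H)
    [CompleteSpace K] :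
    CondOrth L1 L2 K ↔ ∀ x ∈ L1, x - K.starProjection x ∈ L2ᗮ := by
  have inner_residual (x y : H) : ⟪x - K.starProjection x, y - K.starProjection y⟫_ℂ =
      ⟪x - K.starProjection x, y⟫_ℂ := by
    rw [inner_sub_right, (K.mem_orthogonal' _).mp (K.sub_starProjection_mem_orthogonal x) _
      (K.starProjection_apply_mem y), sub_zero]
  refine forall₂_congr fun x _ => ?_
  rw [Submodule.mem_orthogonal']
  exact forall₂_congr fun y _ => by rw [← inner_residual]; rfl

end CondOrth

theorem condOrth_contraction_general {H : Type*} [NormedAddCommGroup H] [InnerProductSpace ℂ H]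
    [CompleteSpace H] (L1 L2 L3 L4 : Submodule ℂ H)
    [CompleteSpace L4]
    (ha : CondOrth L1 L2 L4)
    (hb : CondOrth L1 L3 ((L2 ⊔ L4).topologicalClosure)) :
    CondOrth L1 ((L2 ⊔ L3).topologicalClosure) L4 := by
  simp only [CondOrth.iff_forall_sub_starProjection_mem_orthogonal, Submodule.orthogonal_closure,
    ← Submodule.inf_orthogonal] at ha hb ⊢
  intro x hx
  have residual_mem : x - L4.starProjection x ∈ L2ᗮ ⊓ L4ᗮ :=
    ⟨ha x hx, L4.sub_starProjection_mem_orthogonal x⟩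
  have same_projection : (L2 ⊔ L4).topologicalClosure.starProjection x = L4.starProjection x :=
    Submodule.eq_starProjection_of_mem_orthogonal
      ((L2 ⊔ L4).le_topologicalClosure (Submodule.mem_sup_right (L4.starProjection_apply_mem x)))
      (by rwa [Submodule.orthogonal_closure, ← Submodule.inf_orthogonal])
  exact ⟨ha x hx, same_projection ▸ hb x hx⟩

/-- Contraction property of conditional orthogonality:
if `L1 ⊥ L2 | L4` and `L1 ⊥ L3 | (L2 ∨ L4)` then `L1 ⊥ (L2 ∨ L3) | L4`. -/
theorem condOrth_contraction {H : Type*} [NormedAddCommGroup H] [InnerProductSpace ℂ H]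
    [CompleteSpace H] (L1 L2 L3 L4 : Submodule ℂ H)
    (h1 : IsClosed (L1 : Set H)) (h2 : IsClosed (L2 : Set H))
    (h3 : IsClosed (L3 : Set H)) (h4 : IsClosed (L4 : Set H))
    [CompleteSpace L4]
    (ha : CondOrth L1 L2 L4)
    (hb : CondOrth L1 L3 ((L2 ⊔ L4).topologicalClosure)) :
    CondOrth L1 ((L2 ⊔ L3).topologicalClosure) L4 :=
  condOrth_contraction_general L1 L2 L3 L4 ha hb
end

section
/- Let H be a Hilbert space and suppose subspaces satisfy: for all disjoint index sets A, B from a finite set V, the closed subspaces L_A and L_B satisfy L_A ∩ L_B = {0} and L_A + L_B is closed (equals L_A ∨ L_B). Then for all pairwise disjoint A, B, C ⊆ V, (L_A ∨ L_C) ∩ (L_B ∨ L_C) = L_C, where L_{A∪C} = L_A ∨ L_C etc. -/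
/-- If for all disjoint index sets `A, B ⊆ V` the closed subspaces `L_A` and `L_B`
intersect trivially and their sum is closed, then for pairwise disjoint `A, B, C ⊆ V`
we have `(L_A ∨ L_C) ∩ (L_B ∨ L_C) = L_C`, where `L_{S₁ ∪ S₂} = L_{S₁} ∨ L_{S₂}`. -/
theorem inter_of_linearly_separated {H : Type*} [NormedAddCommGroup H]
    [InnerProductSpace ℂ H] [CompleteSpace H] {V : Type*} [Fintype V]
    (L : Set V → Submodule ℂ H)
    (hclosed : ∀ S : Set V, IsClosed (L S : Set H))
    (hunion : ∀ S1 S2 : Set V, L (S1 ∪ S2) = (L S1 ⊔ L S2).topologicalClosure)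
    (hdisj : ∀ A B : Set V, Disjoint A B →
      L A ⊓ L B = ⊥ ∧ (L A ⊔ L B) = (L A ⊔ L B).topologicalClosure)
    (A B C : Set V) (hAB : Disjoint A B) (hAC : Disjoint A C) (hBC : Disjoint B C) :
    L (A ∪ C) ⊓ L (B ∪ C) = L C := by
  have hAC' := hdisj A C hAC
  have hBC' := hdisj B C hBC
  have hABC : Disjoint A (B ∪ C) := Set.disjoint_union_right.mpr ⟨hAB, hAC⟩
  have h1 : L (A ∪ C) = L A ⊔ L C := by rw [hunion, ← hAC'.2]
  have h2 : L (B ∪ C) = L B ⊔ L C := by rw [hunion, ← hBC'.2]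
  have hbot : L A ⊓ L (B ∪ C) = ⊥ := (hdisj A (B ∪ C) hABC).1
  rw [h1, h2]
  apply le_antisymm
  · rintro x ⟨hx1, hx2⟩
    obtain ⟨a, ha, c, hc, rfl⟩ := Submodule.mem_sup.mp hx1
    have haBC : a ∈ L (B ∪ C) := by
      rw [h2]
      have : a = (a + c) - c := by abel
      rw [this]
      exact sub_mem hx2 (Submodule.mem_sup_right hc)
    have : a ∈ L A ⊓ L (B ∪ C) := ⟨ha, haBC⟩
    rw [hbot] at this
    simp only [Submodule.mem_bot] at this
    simpa [this] using hc
  · exact le_inf le_sup_right le_sup_right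
end

section
/- Let H be a Hilbert space and A, B closed subspaces such that there exists ε̃ ∈ (0,1) with ‖x + y‖² ≥ ε̃(‖x‖² + ‖y‖²) for all x ∈ A, y ∈ B. Then A ∩ B = {0} and A + B is closed. -/
/-- Feldman's criterion: if there is `ε̃ ∈ (0,1)` with
`‖x + y‖² ≥ ε̃ (‖x‖² + ‖y‖²)` for all `x ∈ A`, `y ∈ B`, then `A ∩ B = {0}`
and `A + B` is closed. -/
theorem inf_eq_bot_and_isClosed_sup {H : Type*} [NormedAddCommGroup H]
    [InnerProductSpace ℂ H] [CompleteSpace H] (A B : Submodule ℂ H)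
    (hA : IsClosed (A : Set H)) (hB : IsClosed (B : Set H))
    (ε : ℝ) (hε : ε ∈ Set.Ioo (0 : ℝ) 1)
    (h : ∀ x ∈ A, ∀ y ∈ B, ε * (‖x‖ ^ 2 + ‖y‖ ^ 2) ≤ ‖x + y‖ ^ 2) :
    A ⊓ B = ⊥ ∧ IsClosed ((A ⊔ B : Submodule ℂ H) : Set H) := by
  obtain ⟨hε0, hε1⟩ := hε
  set c := Real.sqrt ε with hc
  have hc0 : 0 < c := Real.sqrt_pos.mpr hε0
  have hc2 : c ^ 2 = ε := Real.sq_sqrt hε0.le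
  have hkey : ∀ a ∈ A, ∀ b ∈ B, c * ‖a‖ ≤ ‖a + b‖ := by
    intro a ha b hb
    have h1 := h a ha b hb
    nlinarith [sq_nonneg ‖b‖, norm_nonneg (a + b), mul_nonneg hc0.le (norm_nonneg a),
      sq_nonneg ‖a‖]
  refine ⟨?_, ?_⟩
  · ext z
    simp only [Submodule.mem_inf, Submodule.mem_bot]
    constructor
    · rintro ⟨hzA, hzB⟩
      have h1 := h z hzA (-z) (B.neg_mem hzB)
      rw [norm_neg, add_neg_cancel, norm_zero] at h1
      have hz2 : ‖z‖ ^ 2 ≤ 0 := by nlinarith [hε0, h1]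
      have hz : ‖z‖ = 0 := by nlinarith [norm_nonneg z, sq_nonneg ‖z‖]
      exact norm_eq_zero.mp hz
    · rintro rfl; exact ⟨A.zero_mem, B.zero_mem⟩
  · rw [← isSeqClosed_iff_isClosed]
    intro u p hu hup
    choose x hxA y hyB hxy using fun n => Submodule.mem_sup.mp (hu n)
    have hcu : CauchySeq u := hup.cauchySeq
    have hx_cauchy : CauchySeq x := by
      rw [Metric.cauchySeq_iff] at hcu ⊢
      intro δ hδ
      obtain ⟨N, hN⟩ := hcu (c * δ) (by positivity)
      refine ⟨N, fun m hm n hn => ?_⟩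
      have h1 := hN m hm n hn
      have h2 : c * ‖x m - x n‖ ≤ ‖u m - u n‖ := by
        have hk := hkey (x m - x n) (A.sub_mem (hxA m) (hxA n)) (y m - y n)
          (B.sub_mem (hyB m) (hyB n))
        have he : (x m - x n) + (y m - y n) = u m - u n := by
          rw [← hxy m, ← hxy n]; abel
        rwa [he] at hk
      rw [dist_eq_norm] at h1 ⊢
      exact (mul_lt_mul_iff_right₀ hc0).mp (lt_of_le_of_lt h2 h1)
    obtain ⟨xl, hxl⟩ := cauchySeq_tendsto_of_complete hx_cauchy
    have hxlA : xl ∈ A := hA.mem_of_tendsto hxl (Filter.Eventually.of_forall hxA)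
    have hyl : Filter.Tendsto y Filter.atTop (nhds (p - xl)) := by
      have ht := hup.sub hxl
      refine ht.congr fun n => ?_
      rw [← hxy n]; abel
    have hylB : p - xl ∈ B := hB.mem_of_tendsto hyl (Filter.Eventually.of_forall hyB)
    exact Submodule.mem_sup.mpr ⟨xl, hxlA, p - xl, hylB, by abel⟩
end

section
/- Let f be a k×k Hermitian positive definite matrix partitioned into blocks f_AA (α×α), f_AB, f_BA, f_BB with f_AB* = f_BA. Let σ1 > 0 be the smallest and σk the largest eigenvalue of f. Then f_AA^{-1/2} f_AB f_BB^{-1} f_BA f_AA^{-1/2} ≤_L (1 - σ1/σk) I_α in the Loewner order. -/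
/-!
Since `σ1 • 1 ≤ f`, the Schur complement `f_AA - f_AB f_BB⁻¹ f_BA` dominates `σ1 • 1`, and since
`f_AA ≤ σk • 1`, also `σ1 • 1 ≥ (σ1 / σk) • f_AA`. Hence
`f_AB f_BB⁻¹ f_BA ≤ (1 - σ1 / σk) • f_AA`, and conjugating by `f_AA^{-1/2}` gives the bound.
The eigenvector-based square root `PosSemidef.sqrt` coincides with `CFC.sqrt`, whose algebra
supplies the conjugation step.
-/

open scoped ComplexOrder

namespace Matrix.PosSemidef

noncomputable def sqrt {n : Type*} [Fintype n] [DecidableEq n] {𝕜 : Type*} [RCLike 𝕜]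
    {A : Matrix n n 𝕜} (hA : A.PosSemidef) : Matrix n n 𝕜 :=
  hA.1.eigenvectorUnitary.1 * Matrix.diagonal ((↑) ∘ (√·) ∘ hA.1.eigenvalues) *
  (star hA.1.eigenvectorUnitary : Matrix n n 𝕜)

end Matrix.PosSemidef

open Matrix
open scoped MatrixOrder

namespace Matrix

variable {m n 𝕜 : Type*} [DecidableEq m] [DecidableEq n] [RCLike 𝕜]

theorem toBlocks₁₁_le_smul_one {f : Matrix (m ⊕ n) (m ⊕ n) 𝕜} {μ : ℝ} (h : f ≤ μ • 1) :
    f.toBlocks₁₁ ≤ μ • 1 := by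
  rw [le_iff]
  convert PosSemidef.submatrix h Sum.inl using 1
  ext i j
  simp [toBlocks₁₁, one_apply]

variable [Fintype m] [Fintype n]

theorem PosSemidef.sqrt_eq_cfcSqrt {A : Matrix n n 𝕜} (hA : A.PosSemidef) :
    hA.sqrt = CFC.sqrt A := by
  rw [CFC.sqrt_eq_real_sqrt A hA.nonneg, cfcₙ_eq_cfc, hA.1.cfc_eq, IsHermitian.cfc,
    Unitary.conjStarAlgAut_apply]
  rfl

theorem IsHermitian.smul_one_le_of_le_eigenvalues {A : Matrix n n 𝕜} (hA : A.IsHermitian)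
    {μ : ℝ} (h : ∀ i, μ ≤ hA.eigenvalues i) : μ • 1 ≤ A := by
  rw [← Algebra.algebraMap_eq_smul_one, algebraMap_le_iff_le_spectrum hA.isSelfAdjoint,
    hA.spectrum_real_eq_range_eigenvalues]
  rintro _ ⟨i, rfl⟩
  exact h i

theorem IsHermitian.le_smul_one_of_eigenvalues_le {A : Matrix n n 𝕜} (hA : A.IsHermitian)
    {μ : ℝ} (h : ∀ i, hA.eigenvalues i ≤ μ) : A ≤ μ • 1 := by
  rw [← Algebra.algebraMap_eq_smul_one, le_algebraMap_iff_spectrum_le hA.isSelfAdjoint,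
    hA.spectrum_real_eq_range_eigenvalues]
  rintro _ ⟨i, rfl⟩
  exact h i

theorem PosDef.smul_one_le_schur_complement {f : Matrix (m ⊕ n) (m ⊕ n) 𝕜} (hf : f.PosDef)
    {μ : ℝ} (hμ : 0 ≤ μ) (h : μ • 1 ≤ f) :
    μ • 1 ≤ f.toBlocks₁₁ - f.toBlocks₁₂ * f.toBlocks₂₂⁻¹ * f.toBlocks₂₁ := by
  have hD : f.toBlocks₂₂.PosDef := hf.submatrix Sum.inr_injective
  have := hD.isUnit.invertible
  have h₂₁ : f.toBlocks₂₁ = f.toBlocks₁₂ᴴ := by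
    ext i j
    exact (hf.isHermitian.apply (.inr i) (.inl j)).symm
  have hdiag : (fromBlocks 0 0 0 (μ • 1) : Matrix (m ⊕ n) (m ⊕ n) 𝕜).PosSemidef := by
    have : (fromBlocks 0 0 0 (μ • 1) : Matrix (m ⊕ n) (m ⊕ n) 𝕜)
        = diagonal (0 ⊕ᵥ fun _ => (μ : 𝕜)) := by
      rw [← fromBlocks_diagonal, ← smul_one_eq_diagonal, ← RCLike.real_smul_eq_coe_smul,
        Pi.zero_def, diagonal_zero]
    rw [this, posSemidef_diagonal_iff]
    rintro (i | i)
    · simp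
    · simpa using hμ
  -- `f - μ • 1` plus `diag(0, μ • 1)` lowers only the upper-left block by `μ`.
  have hshift : (fromBlocks (f.toBlocks₁₁ - μ • 1) f.toBlocks₁₂ f.toBlocks₁₂ᴴ
      f.toBlocks₂₂).PosSemidef := by
    convert h.add hdiag using 1
    rw [← h₂₁]
    conv_rhs => rw [← f.fromBlocks_toBlocks]
    ext (i | i) (j | j) <;> simp [one_apply]
  rw [le_iff, sub_right_comm]
  exact h₂₁ ▸ (PosDef.fromBlocks₂₂ _ _ hD).1 hshift

theorem PosDef.inv_sqrt_mul_mul_inv_sqrt_le {A X : Matrix n n 𝕜} (hA : A.PosDef) {c : ℝ}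
    (h : X ≤ c • A) : (CFC.sqrt A)⁻¹ * X * (CFC.sqrt A)⁻¹ ≤ c • 1 := by
  set R := CFC.sqrt A
  have hR : R * R = A := CFC.sqrt_mul_sqrt_self A hA.posSemidef.nonneg
  have hRdet : IsUnit R.det :=
    (isUnit_iff_isUnit_det R).1 ((CFC.isUnit_sqrt_iff A hA.posSemidef.nonneg).2 hA.isUnit)
  have hRinv : IsSelfAdjoint R⁻¹ := (CFC.sqrt_nonneg A).posSemidef.isHermitian.inv
  calc R⁻¹ * X * R⁻¹ ≤ R⁻¹ * (c • A) * R⁻¹ := hRinv.conjugate_le_conjugate h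
    _ = c • 1 := by
      rw [← hR, Matrix.mul_smul, Matrix.smul_mul, ← Matrix.mul_assoc, Matrix.mul_assoc _ R,
        nonsing_inv_mul _ hRdet, Matrix.one_mul, mul_nonsing_inv _ hRdet]

end Matrix

/-- For a Hermitian positive definite block matrix `f` with smallest eigenvalue `σ1 > 0`
and largest eigenvalue `σk`, the multiple coherence satisfies
`f_AA^{-1/2} f_AB f_BB⁻¹ f_BA f_AA^{-1/2} ≤_L (1 - σ1/σk) I`. -/
theorem coherence_loewner_bound {a b : ℕ}
    (f : Matrix (Fin a ⊕ Fin b) (Fin a ⊕ Fin b) ℂ) (hf : f.PosDef)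
    (σ1 σk : ℝ) (hσ1pos : 0 < σ1)
    (h1 : IsLeast (Set.range hf.isHermitian.eigenvalues) σ1)
    (hk : IsGreatest (Set.range hf.isHermitian.eigenvalues) σk) :
    (((1 - σ1 / σk : ℝ) : ℂ) • (1 : Matrix (Fin a) (Fin a) ℂ)
      - ((hf.posSemidef.submatrix Sum.inl).sqrt)⁻¹
        * f.submatrix Sum.inl Sum.inr
        * (f.submatrix Sum.inr Sum.inr)⁻¹
        * f.submatrix Sum.inr Sum.inl
        * ((hf.posSemidef.submatrix Sum.inl).sqrt)⁻¹).PosSemidef := by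
  have hσk : 0 < σk := hσ1pos.trans_le (hk.2 h1.1)
  have hlow : σ1 • 1 ≤ f := hf.isHermitian.smul_one_le_of_le_eigenvalues fun i => h1.2 ⟨i, rfl⟩
  have hup : f.toBlocks₁₁ ≤ σk • 1 :=
    toBlocks₁₁_le_smul_one (hf.isHermitian.le_smul_one_of_eigenvalues_le fun i => hk.2 ⟨i, rfl⟩)
  have hcoh : f.toBlocks₁₂ * f.toBlocks₂₂⁻¹ * f.toBlocks₂₁ ≤ (1 - σ1 / σk) • f.toBlocks₁₁ :=
    calc _ ≤ f.toBlocks₁₁ - σ1 • 1 :=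
          le_sub_comm.1 (hf.smul_one_le_schur_complement hσ1pos.le hlow)
      _ ≤ f.toBlocks₁₁ - (σ1 / σk) • f.toBlocks₁₁ := by
          gcongr
          calc (σ1 / σk) • f.toBlocks₁₁ ≤ (σ1 / σk) • (σk • 1) :=
                smul_le_smul_of_nonneg_left hup (by positivity)
            _ = σ1 • 1 := by rw [smul_smul, div_mul_cancel₀ _ hσk.ne']
      _ = (1 - σ1 / σk) • f.toBlocks₁₁ := by rw [sub_smul, one_smul]
  rw [← le_iff, Complex.coe_smul, (hf.posSemidef.submatrix Sum.inl).sqrt_eq_cfcSqrt]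
  have hconj := (hf.submatrix Sum.inl_injective).inv_sqrt_mul_mul_inv_sqrt_le hcoh
  simp only [Matrix.mul_assoc] at hconj ⊢
  exact hconj
end
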